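/- Define G₂ = diag-block(0, Ā⁻¹, 0) (the (n+1)×(n+1) matrix whose interior block is Ā⁻¹ and boundary rows/columns are zero). Under the consistency relations on A, it holds that AG₂ = I − e_L(𝟙 − x/ℓ)ᵀ − e_R xᵀ/ℓ. -/

import Mathlib

/-!
On an interior row `A G₂` is `Ā Ā⁻¹ = I` in the interior columns and zero in the boundary columns.
The consistency relations say that `u = 𝟙 - x/ℓ` and `w = x/ℓ` are annihilated by the interior
rows of `A`, i.e. `Ā u_int = -a₀` and `Ā w_int = -aₙ`, where `a₀, aₙ` are the boundary columns
of `A` restricted to the interior. As `Ā` is symmetric, the boundary rows of `A G₂` are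
`a₀ᵀ Ā⁻¹ = (Ā⁻¹ a₀)ᵀ = -u_intᵀ` and `aₙᵀ Ā⁻¹ = -w_intᵀ`.
-/

open Matrix

theorem Matrix.IsSymm.mulVec_vecMul_inv {ι K : Type*} [Fintype ι] [DecidableEq ι] [CommRing K]
    {B : Matrix ι ι K} (hB : B.IsSymm) (hdet : IsUnit B.det) (v : ι → K) :
    (B *ᵥ v) ᵥ* B⁻¹ = v := by
  rw [← hB.inv, vecMul_transpose, mulVec_mulVec, nonsing_inv_mul B hdet, one_mulVec]

/-- The interior nodes `1, …, n - 1` of the grid `0, …, n`; the interior block `Ā` of a matrix `A`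
is `A.submatrix (interiorNode n) (interiorNode n)`. -/
def interiorNode (n : ℕ) (i : Fin (n - 1)) : Fin (n + 1) := ⟨i + 1, by omega⟩

namespace interiorNode

variable {n : ℕ}

theorem ne_zero (p : Fin (n - 1)) : interiorNode n p ≠ 0 := by
  simp [interiorNode, Fin.ext_iff]

theorem ne_last (p : Fin (n - 1)) : interiorNode n p ≠ Fin.last n := by
  simp only [interiorNode, ne_eq, Fin.ext_iff, Fin.val_last]
  omega

theorem injective : Function.Injective (interiorNode n) := by
  intro p q h
  simpa [interiorNode, Fin.ext_iff] using h

end interiorNode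

theorem Fin.eq_zero_or_eq_last_or_exists_interiorNode {n : ℕ} (i : Fin (n + 1)) :
    i = 0 ∨ i = Fin.last n ∨ ∃ p, interiorNode n p = i := by
  rcases Nat.eq_zero_or_pos i with h0 | hpos
  · exact .inl (Fin.ext h0)
  rcases i.is_le.eq_or_lt with hn | hlt
  · exact .inr (.inl (Fin.ext hn))
  exact .inr (.inr ⟨⟨i - 1, by omega⟩, Fin.ext (by simp [interiorNode]; omega)⟩)

theorem Fin.sum_univ_eq_zero_add_last_add_interiorNode {M : Type*} [AddCommMonoid M] {n : ℕ}
    (hn : 1 ≤ n) (f : Fin (n + 1) → M) :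
    ∑ i, f i = f 0 + f (Fin.last n) + ∑ p, f (interiorNode n p) := by
  obtain ⟨m, rfl⟩ : ∃ m, n = m + 1 := ⟨n - 1, by omega⟩
  rw [Fin.sum_univ_succ, Fin.sum_univ_castSucc, Fin.succ_last]
  simp only [add_comm (f (Fin.last (m + 1))), add_assoc]
  rfl

section InteriorBlock

variable {R : Type*} [CommRing R] {n : ℕ} (A : Matrix (Fin (n + 1)) (Fin (n + 1)) R)

theorem mulVec_interiorNode (hn : 1 ≤ n) (v : Fin (n + 1) → R) (p : Fin (n - 1)) :
    (A *ᵥ v) (interiorNode n p) = A (interiorNode n p) 0 * v 0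
      + A (interiorNode n p) (Fin.last n) * v (Fin.last n)
      + (A.submatrix (interiorNode n) (interiorNode n) *ᵥ (v ∘ interiorNode n)) p := by
  simp only [mulVec, dotProduct, Fin.sum_univ_eq_zero_add_last_add_interiorNode hn,
    submatrix_apply, Function.comp_apply]

theorem mul_apply_eq_sum_interiorNode (hn : 1 ≤ n) {G : Matrix (Fin (n + 1)) (Fin (n + 1)) R}
    (hG0 : ∀ j, G 0 j = 0) (hGN : ∀ j, G (Fin.last n) j = 0) (i j : Fin (n + 1)) :
    (A * G) i j = ∑ p, A i (interiorNode n p) * G (interiorNode n p) j := by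
  rw [mul_apply, Fin.sum_univ_eq_zero_add_last_add_interiorNode hn, hG0, hGN]
  simp

theorem vecMul_interior_inv_of_mulVec_eq_zero (hn : 1 ≤ n) (hA : A.IsSymm)
    (hdet : IsUnit (A.submatrix (interiorNode n) (interiorNode n)).det) {v : Fin (n + 1) → R}
    (hv : ∀ p, (A *ᵥ v) (interiorNode n p) = 0) :
    (fun p => v 0 * A 0 (interiorNode n p) + v (Fin.last n) * A (Fin.last n) (interiorNode n p))
      ᵥ* (A.submatrix (interiorNode n) (interiorNode n))⁻¹ = -(v ∘ interiorNode n) := by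
  set B := A.submatrix (interiorNode n) (interiorNode n)
  have hboundary : (fun p => v 0 * A 0 (interiorNode n p)
      + v (Fin.last n) * A (Fin.last n) (interiorNode n p)) = -(B *ᵥ (v ∘ interiorNode n)) := by
    ext p
    rw [Pi.neg_apply, eq_neg_iff_add_eq_zero, ← hv p, mulVec_interiorNode A hn, hA.apply,
      hA.apply (Fin.last n)]
    ring
  rw [hboundary, neg_vecMul, (hA.submatrix _).mulVec_vecMul_inv hdet]

theorem mul_eq_one_sub_of_mulVec_interiorNode_eq_zero (hn : 1 ≤ n) (hA : A.IsSymm)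
    (hdet : IsUnit (A.submatrix (interiorNode n) (interiorNode n)).det)
    {G : Matrix (Fin (n + 1)) (Fin (n + 1)) R} (hG0 : ∀ j, G 0 j = 0)
    (hGN : ∀ j, G (Fin.last n) j = 0) (hG0' : ∀ i, G i 0 = 0) (hGN' : ∀ i, G i (Fin.last n) = 0)
    (hGint : ∀ p q, G (interiorNode n p) (interiorNode n q) =
      (A.submatrix (interiorNode n) (interiorNode n))⁻¹ p q)
    {u w : Fin (n + 1) → R} (hu : ∀ p, (A *ᵥ u) (interiorNode n p) = 0)
    (hw : ∀ p, (A *ᵥ w) (interiorNode n p) = 0) (hu0 : u 0 = 1) (huN : u (Fin.last n) = 0)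
    (hw0 : w 0 = 0) (hwN : w (Fin.last n) = 1) :
    A * G = 1 - of (fun i j => (if i = 0 then 1 else 0) * u j)
      - of (fun i j => (if i = Fin.last n then 1 else 0) * w j) := by
  have hn0 : n ≠ 0 := by omega
  have hleft := vecMul_interior_inv_of_mulVec_eq_zero A hn hA hdet hu
  have hright := vecMul_interior_inv_of_mulVec_eq_zero A hn hA hdet hw
  simp only [hu0, huN, hw0, hwN, one_mul, zero_mul, add_zero, zero_add] at hleft hright
  ext i j
  rw [mul_apply_eq_sum_interiorNode A hn hG0 hGN]
  rcases j.eq_zero_or_eq_last_or_exists_interiorNode with rfl | rfl | ⟨q, rfl⟩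
  · by_cases hi : i = 0 <;> simp [hG0', hu0, hw0, hi, one_apply]
  · by_cases hi : i = Fin.last n <;> simp [hGN', huN, hwN, hi, one_apply]
  simp only [hGint]
  rcases i.eq_zero_or_eq_last_or_exists_interiorNode with rfl | rfl | ⟨r, rfl⟩
  · simpa [vecMul, dotProduct, one_apply, (interiorNode.ne_zero q).symm, hn0]
      using congrFun hleft q
  · simpa [vecMul, dotProduct, one_apply, (interiorNode.ne_last q).symm, hn0]
      using congrFun hright q
  · have hinv := congrFun (congrFun (mul_nonsing_inv _ hdet) r) q
    simp only [mul_apply, submatrix_apply] at hinv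
    simpa [one_apply, interiorNode.ne_zero, interiorNode.ne_last,
      interiorNode.injective.eq_iff] using hinv

end InteriorBlock

/-- The zero-padded interior inverse `G₂` satisfies
`A G₂ = I - e_L (𝟙 - x/ℓ)ᵀ - e_R xᵀ/ℓ`. -/
theorem stmt6 (n : ℕ) (hn : 2 ≤ n) (h : ℝ) (hh : 0 < h)
    (A : Matrix (Fin (n+1)) (Fin (n+1)) ℝ) (hAsym : Aᵀ = A)
    (x : Fin (n+1) → ℝ) (hx : x = fun (i : Fin (n+1)) => h * ((i : ℕ) : ℝ))
    (ℓ : ℝ) (hℓ : ℓ = n * h)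
    (eL eR : Fin (n+1) → ℝ)
    (heL : eL = fun i => if i = 0 then 1 else 0)
    (heR : eR = fun i => if i = Fin.last n then 1 else 0)
    (hA1 : A *ᵥ (fun i => ℓ * 1 - x i) = eL - eR)
    (hAx : A *ᵥ x = eR - eL)
    (emb : Fin (n-1) → Fin (n+1))
    (hemb : emb = fun i => ⟨(i : ℕ) + 1, by have := i.isLt; omega⟩)
    (Ab : Matrix (Fin (n-1)) (Fin (n-1)) ℝ)
    (hAb : Ab = Matrix.of fun i j => A (emb i) (emb j))
    (hAbinv : IsUnit Ab.det)
    (G2 : Matrix (Fin (n+1)) (Fin (n+1)) ℝ)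
    (hG2int : ∀ i j : Fin (n-1), G2 (emb i) (emb j) = Ab⁻¹ i j)
    (hG2bd : ∀ j : Fin (n+1), G2 0 j = 0 ∧ G2 (Fin.last n) j = 0
      ∧ G2 j 0 = 0 ∧ G2 j (Fin.last n) = 0) :
    A * G2 = 1 - Matrix.of (fun i j => eL i * (1 - x j / ℓ))
      - Matrix.of (fun i j => eR i * (x j / ℓ)) := by
  obtain rfl : emb = interiorNode n := hemb
  obtain rfl : Ab = A.submatrix (interiorNode n) (interiorNode n) := hAb
  subst heL heR
  have hn1 : 1 ≤ n := by omega
  have hℓ0 : ℓ ≠ 0 := by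
    have : (0 : ℝ) < n := by positivity
    rw [hℓ]; positivity
  have hx0 : x 0 = 0 := by simp [hx]
  have hxN : x (Fin.last n) = ℓ := by simp [hx, hℓ, mul_comm]
  have hu : (fun j => 1 - x j / ℓ) = ℓ⁻¹ • fun j => ℓ * 1 - x j := by
    ext j
    simp only [Pi.smul_apply, smul_eq_mul]
    field_simp
  have hw : (fun j => x j / ℓ) = ℓ⁻¹ • x := by
    ext j
    simp only [Pi.smul_apply, smul_eq_mul]
    ring
  exact mul_eq_one_sub_of_mulVec_interiorNode_eq_zero A hn1 hAsym hAbinv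
    (fun j => (hG2bd j).1) (fun j => (hG2bd j).2.1) (fun i => (hG2bd i).2.2.1)
    (fun i => (hG2bd i).2.2.2) hG2int
    (fun p => by rw [hu, mulVec_smul, hA1]; simp [interiorNode.ne_zero, interiorNode.ne_last])
    (fun p => by rw [hw, mulVec_smul, hAx]; simp [interiorNode.ne_zero, interiorNode.ne_last])
    (by simp [hx0]) (by simp [hxN, hℓ0]) (by simp [hx0]) (by simp [hxN, hℓ0])
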